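/- arXiv:1408.6198 — 9 statements merged into one kernel-verified Lean document; each statement's English description precedes it below -/
import Mathlib

section
/- Reading an alignment A ∈ 𝒜^* from the initial state ⟨∅,0⟩ of the subset seed automaton S_π ends in the final state if and only if there exists a position p with 1 ≤ p and p + s − 1 ≤ |A| such that π matches A at position p. -/
variable {A : Type*}

/-- One transition of the subset seed automaton `S_π`: the state `none` is the final sink
state, a state `some (X, t)` is the non-final state `⟨X,t⟩`. -/
def seedStep [DecidableEq A] (one : A) (π : ℕ → Finset A) (s : ℕ) :
    Option (Finset ℕ × ℕ) → A → Option (Finset ℕ × ℕ)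
  | none, _ => none
  | some (X, t), a =>
    if a = one then
      if X.sup id + (t + 1) = s then none else some (X, t + 1)
    else
      let Y : Finset ℕ := ((Finset.Icc 1 (t + 1)).filter fun x => a ∈ π x) ∪
        ((X.filter fun x => x + t + 1 ≤ s ∧ a ∈ π (x + t + 1)).image fun x => x + t + 1)
      if Y.sup id = s then none else some (Y, 0)

/-- Reading a word from a state, applying transitions letter by letter. -/
def seedRead [DecidableEq A] (one : A) (π : ℕ → Finset A) (s : ℕ)
    (q : Option (Finset ℕ × ℕ)) (w : List A) : Option (Finset ℕ × ℕ) :=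
  w.foldl (seedStep one π s) q

/-- `π` matches the alignment `w` at the (1-based) position `p`. -/
def seedMatches (one : A) (π : ℕ → Finset A) (s : ℕ) (w : List A) (p : ℕ) : Prop :=
  1 ≤ p ∧ p + s ≤ w.length + 1 ∧
    ∀ i, 1 ≤ i → i ≤ s → w.getD (p + i - 2) one ∈ π i


def PM (one : A) (π : ℕ → Finset A) (u : List A) (m x : ℕ) : Prop :=
  ∀ i, 1 ≤ i → i ≤ x → u.getD (m - x + i - 1) one ∈ π i

def FM (one : A) (π : ℕ → Finset A) (s : ℕ) (u : List A) (m : ℕ) : Prop :=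
  s ≤ m ∧ m ≤ u.length ∧ PM one π u m s

lemma seedStep_some [DecidableEq A] (one : A) (π : ℕ → Finset A) (s : ℕ)
    (X : Finset ℕ) (t : ℕ) (a : A) :
    seedStep one π s (some (X, t)) a =
      if a = one then
        (if X.sup id + (t + 1) = s then none else some (X, t + 1))
      else
        (if (((Finset.Icc 1 (t + 1)).filter fun x => a ∈ π x) ∪
            ((X.filter fun x => x + t + 1 ≤ s ∧ a ∈ π (x + t + 1)).image
              fun x => x + t + 1)).sup id = s
         then none
         else some ((((Finset.Icc 1 (t + 1)).filter fun x => a ∈ π x) ∪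
            ((X.filter fun x => x + t + 1 ≤ s ∧ a ∈ π (x + t + 1)).image
              fun x => x + t + 1)), 0)) := rfl

lemma PM_concat (one : A) (π : ℕ → Finset A) (u : List A) (a : A) (m x : ℕ)
    (hm : m ≤ u.length) (hx : x ≤ m) :
    PM one π (u ++ [a]) m x ↔ PM one π u m x := by
  have key : ∀ i, 1 ≤ i → i ≤ x →
      (u ++ [a]).getD (m - x + i - 1) one = u.getD (m - x + i - 1) one := by
    intro i h1 hi
    exact List.getD_append _ _ _ _ (by omega)
  constructor
  · intro h i h1 hi
    have := h i h1 hi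
    rwa [key i h1 hi] at this
  · intro h i h1 hi
    rw [key i h1 hi]
    exact h i h1 hi

lemma FM_concat (one : A) (π : ℕ → Finset A) (s : ℕ) (u : List A) (a : A) (m : ℕ)
    (hm : m ≤ u.length) :
    FM one π s (u ++ [a]) m ↔ FM one π s u m := by
  unfold FM
  simp only [List.length_append, List.length_singleton]
  constructor
  · rintro ⟨h1, h2, h3⟩
    exact ⟨h1, hm, (PM_concat one π u a m s hm h1).mp h3⟩
  · rintro ⟨h1, h2, h3⟩
    exact ⟨h1, by omega, (PM_concat one π u a m s hm h1).mpr h3⟩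

lemma ones_get (one : A) (u : List A) (t k : ℕ)
    (h : ∀ j, j < t → u.getD (u.length - 1 - j) one = one)
    (hk1 : u.length - t ≤ k) (hk2 : k < u.length) : u.getD k one = one := by
  have := h (u.length - 1 - k) (by omega)
  rwa [show u.length - 1 - (u.length - 1 - k) = k by omega] at this

def InvSome (one : A) (π : ℕ → Finset A) (s : ℕ) (u : List A)
    (X : Finset ℕ) (t : ℕ) : Prop :=
  (¬ ∃ m, FM one π s u m) ∧ t ≤ u.length ∧ t < s ∧
    (∀ j, j < t → u.getD (u.length - 1 - j) one = one) ∧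
    ∀ x, x ∈ X ↔ (1 ≤ x ∧ x + t < s ∧ x + t ≤ u.length ∧
      PM one π u (u.length - t) x)

def AutInv (one : A) (π : ℕ → Finset A) (s : ℕ) (u : List A) :
    Option (Finset ℕ × ℕ) → Prop
  | none => ∃ m, FM one π s u m
  | some q => InvSome one π s u q.1 q.2

lemma step_inv [DecidableEq A] (one : A) (π : ℕ → Finset A) (s : ℕ)
    (hs : 1 ≤ s) (hone : ∀ i, 1 ≤ i → i ≤ s → one ∈ π i)
    (u : List A) (a : A) (q : Option (Finset ℕ × ℕ)) (h : AutInv one π s u q) :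
    AutInv one π s (u ++ [a]) (seedStep one π s q a) := by
  have hlen : (u ++ [a]).length = u.length + 1 := by simp
  have hgetn : (u ++ [a]).getD u.length one = a := by
    rw [List.getD_append_right u [a] one u.length le_rfl]
    simp
  match q with
  | none =>
    obtain ⟨m, hm⟩ := h
    exact ⟨m, (FM_concat one π s u a m hm.2.1).mpr hm⟩
  | some (X, t) =>
    have h' : InvSome one π s u X t := h
    obtain ⟨hnoFM, htn, hts, hones, hmem⟩ := h'
    have hsup_le : X.sup id ≤ s - t - 1 := by
      apply Finset.sup_le
      intro x hx
      have := (hmem x).mp hx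
      show x ≤ s - t - 1
      omega
    rw [seedStep_some]
    by_cases ha : a = one
    · subst ha
      rw [if_pos rfl]
      -- key : trailing positions of u ++ [a] are all `one`
      have hkey : ∀ k, u.length - t ≤ k → k < u.length + 1 →
          (u ++ [a]).getD k a = a := by
        intro k h1 h2
        rcases eq_or_lt_of_le (Nat.lt_succ_iff.mp h2) with hk | hk
        · rw [hk, hgetn]
        · rw [List.getD_append _ _ _ _ (by omega)]
          exact ones_get a u t k hones (by omega) hk
      have hx0mem : X.sup id = 0 ∨ X.sup id ∈ X := by
        rcases X.eq_empty_or_nonempty with hX | hX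
        · left; simp [hX]
        · right
          obtain ⟨y, hy, hsy⟩ := Finset.exists_mem_eq_sup X hX id
          rw [hsy, id_eq]; exact hy
      have hx0n : X.sup id + t ≤ u.length := by
        rcases hx0mem with h0 | hX
        · omega
        · have := (hmem _).mp hX; omega
      have hPMx0 : PM a π u (u.length - t) (X.sup id) := by
        rcases hx0mem with h0 | hX
        · intro i h1 hi; omega
        · exact ((hmem _).mp hX).2.2.2
      split_ifs with hif
      · -- full match found ending at u.length + 1
        refine ⟨u.length + 1, by omega, by simp, ?_⟩
        intro i h1 hi
        by_cases hix : i ≤ X.sup id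
        · rw [List.getD_append _ _ _ _ (by omega),
            show u.length + 1 - s + i - 1 = u.length - t - X.sup id + i - 1 by omega]
          exact hPMx0 i h1 hix
        · rw [hkey (u.length + 1 - s + i - 1) (by omega) (by omega)]
          exact hone i h1 hi
      · -- still running : state ⟨X, t+1⟩
        have hts' : t + 1 < s := by
          by_contra h'
          have hX : X = ∅ := by
            apply Finset.eq_empty_iff_forall_notMem.mpr
            intro x hx
            have := (hmem x).mp hx
            omega
          apply hif
          rw [hX, Finset.sup_empty]
          simp only [Nat.bot_eq_zero]
          omega
        refine ⟨?_, by simp; omega, hts', ?_, ?_⟩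
        · rintro ⟨m, hm⟩
          have hm2 := hm.2.1
          rw [hlen] at hm2
          rcases Nat.lt_or_ge m (u.length + 1) with hmn | hmn
          · exact hnoFM ⟨m, (FM_concat a π s u a m (by omega)).mp hm⟩
          · have heq : m = u.length + 1 := by omega
            rw [heq] at hm
            obtain ⟨hm1, _, hm3⟩ := hm
            -- derive X.sup id + (t+1) = s, contradiction with hif
            apply hif
            rcases Nat.lt_or_ge (t + 1) s with hlt | hge
            · -- s ≥ t + 2 : then s - t - 1 ∈ X
              have hx1 : s - t - 1 ∈ X := by
                apply (hmem _).mpr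
                refine ⟨by omega, by omega, by omega, ?_⟩
                intro i h1 hi
                have := hm3 i h1 (by omega)
                rw [List.getD_append _ _ _ _ (by omega)] at this
                rwa [show u.length - t - (s - t - 1) + i - 1
                    = u.length + 1 - s + i - 1 by omega]
              have := Finset.le_sup (f := id) hx1
              simp only [id_eq] at this
              omega
            · -- s = t + 1 : X = ∅
              have hX : X = ∅ := by
                apply Finset.eq_empty_iff_forall_notMem.mpr
                intro x hx
                have := (hmem x).mp hx
                omega
              rw [hX, Finset.sup_empty]
              simp only [Nat.bot_eq_zero]
              omega
        · intro j hj
          rw [hlen, show u.length + 1 - 1 - j = u.length - j by omega]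
          rcases Nat.eq_zero_or_pos j with h0 | h0
          · rw [h0, Nat.sub_zero, hgetn]
          · rw [List.getD_append _ _ _ _ (by omega),
              show u.length - j = u.length - 1 - (j - 1) by omega]
            exact hones (j - 1) (by omega)
        · intro x
          rw [hlen, hmem x]
          constructor
          · rintro ⟨h1, h2, h3, h4⟩
            have hxle : x ≤ X.sup id := by
              have := Finset.le_sup (f := id) ((hmem x).mpr ⟨h1, h2, h3, h4⟩)
              simpa using this
            refine ⟨h1, by omega, by omega, ?_⟩
            rw [show u.length + 1 - (t + 1) = u.length - t by omega]
            exact (PM_concat a π u a (u.length - t) x (by omega) (by omega)).mpr h4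
          · rintro ⟨h1, h2, h3, h4⟩
            rw [show u.length + 1 - (t + 1) = u.length - t by omega] at h4
            refine ⟨h1, by omega, by omega, ?_⟩
            exact (PM_concat a π u a (u.length - t) x (by omega) (by omega)).mp h4
    · rw [if_neg ha]
      set Y := (((Finset.Icc 1 (t + 1)).filter fun x => a ∈ π x) ∪
          ((X.filter fun x => x + t + 1 ≤ s ∧ a ∈ π (x + t + 1)).image
            fun x => x + t + 1)) with hYdef
      have hYmem : ∀ x, x ∈ Y ↔ (1 ≤ x ∧ x ≤ s ∧ x ≤ u.length + 1 ∧
          PM one π (u ++ [a]) (u.length + 1) x) := by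
        intro x
        rw [hYdef]
        simp only [Finset.mem_union, Finset.mem_filter, Finset.mem_Icc, Finset.mem_image]
        constructor
        · rintro (⟨⟨hx1, hx2⟩, hxa⟩ | ⟨x', ⟨hx'X, hx's, hx'a⟩, rfl⟩)
          · refine ⟨hx1, by omega, by omega, ?_⟩
            intro i hi1 hi2
            rcases eq_or_lt_of_le hi2 with hix | hix
            · rw [show u.length + 1 - x + i - 1 = u.length by omega, hgetn]
              exact hix ▸ hxa
            · rw [List.getD_append _ _ _ _ (by omega),
                ones_get one u t _ hones (by omega) (by omega)]
              exact hone i hi1 (by omega)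
          · have hm := (hmem x').mp hx'X
            refine ⟨by omega, hx's, by omega, ?_⟩
            intro i hi1 hi2
            by_cases hii : i ≤ x'
            · rw [List.getD_append _ _ _ _ (by omega),
                show u.length + 1 - (x' + t + 1) + i - 1
                  = u.length - t - x' + i - 1 by omega]
              exact hm.2.2.2 i hi1 hii
            · rcases eq_or_lt_of_le hi2 with hix | hix
              · rw [show u.length + 1 - (x' + t + 1) + i - 1 = u.length by omega, hgetn]
                exact hix ▸ hx'a
              · rw [List.getD_append _ _ _ _ (by omega),
                  ones_get one u t _ hones (by omega) (by omega)]
                exact hone i hi1 (by omega)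
        · rintro ⟨hx1, hxs, hxlen, hPM⟩
          by_cases hxt : x ≤ t + 1
          · left
            refine ⟨⟨hx1, hxt⟩, ?_⟩
            have := hPM x hx1 le_rfl
            rwa [show u.length + 1 - x + x - 1 = u.length by omega, hgetn] at this
          · right
            refine ⟨x - t - 1, ⟨?_, by omega, ?_⟩, by omega⟩
            · apply (hmem (x - t - 1)).mpr
              refine ⟨by omega, by omega, by omega, ?_⟩
              intro i hi1 hi2
              have := hPM i hi1 (by omega)
              rw [List.getD_append _ _ _ _ (by omega)] at this
              rwa [show u.length - t - (x - t - 1) + i - 1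
                  = u.length + 1 - x + i - 1 by omega]
            · rw [show x - t - 1 + t + 1 = x by omega]
              have := hPM x hx1 le_rfl
              rwa [show u.length + 1 - x + x - 1 = u.length by omega, hgetn] at this
      have hYle : ∀ y ∈ Y, y ≤ s := fun y hy => ((hYmem y).mp hy).2.1
      have hssup : Y.sup id = s ↔ s ∈ Y := by
        constructor
        · intro hsup
          by_contra hsY
          have hle : Y.sup id ≤ s - 1 := by
            apply Finset.sup_le
            intro y hy
            show y ≤ s - 1
            have h1 := hYle y hy
            rcases eq_or_lt_of_le h1 with h' | h'
            · exact absurd (h' ▸ hy) hsY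
            · omega
          omega
        · intro hsY
          refine le_antisymm (Finset.sup_le fun y hy => ?_) ?_
          · simpa using hYle y hy
          · simpa using Finset.le_sup (f := id) hsY
      have hFMnew : FM one π s (u ++ [a]) (u.length + 1) ↔ s ∈ Y := by
        constructor
        · rintro ⟨h1, h2, h3⟩
          exact (hYmem s).mpr ⟨hs, le_rfl, h1, h3⟩
        · intro hsx
          obtain ⟨h1, h2, h3, h4⟩ := (hYmem s).mp hsx
          exact ⟨h3, by simp, h4⟩
      split_ifs with hif
      · exact ⟨u.length + 1, hFMnew.mpr (hssup.mp hif)⟩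
      · refine ⟨?_, by simp, by omega, by omega, ?_⟩
        · rintro ⟨m, hm⟩
          have hm2 := hm.2.1
          rw [hlen] at hm2
          rcases Nat.lt_or_ge m (u.length + 1) with hmn | hmn
          · exact hnoFM ⟨m, (FM_concat one π s u a m (by omega)).mp hm⟩
          · have heq : m = u.length + 1 := by omega
            rw [heq] at hm
            exact hif (hssup.mpr (hFMnew.mp hm))
        · intro x
          constructor
          · intro hx
            obtain ⟨h1, h2, h3, h4⟩ := (hYmem x).mp hx
            have hxs : x ≠ s := fun h' => hif (hssup.mpr (h' ▸ hx))
            refine ⟨h1, by omega, by rw [hlen]; omega, ?_⟩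
            rw [hlen, show u.length + 1 - 0 = u.length + 1 by omega]
            exact h4
          · rintro ⟨h1, h2, h3, h4⟩
            rw [hlen] at h3
            rw [hlen, show u.length + 1 - 0 = u.length + 1 by omega] at h4
            exact (hYmem x).mpr ⟨h1, by omega, by omega, h4⟩


lemma read_inv [DecidableEq A] (one : A) (π : ℕ → Finset A) (s : ℕ)
    (hs : 1 ≤ s) (hone : ∀ i, 1 ≤ i → i ≤ s → one ∈ π i) (w : List A) :
    AutInv one π s w (seedRead one π s (some (∅, 0)) w) := by
  induction w using List.reverseRecOn with
  | nil =>
    refine ⟨?_, le_rfl, by omega, by omega, ?_⟩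
    · rintro ⟨m, h1, h2, h3⟩
      simp at h2
      omega
    · intro x
      simp only [Finset.notMem_empty, false_iff]
      rintro ⟨h1, h2, h3, h4⟩
      simp at h3
      omega
  | append_singleton u b ih =>
    have : seedRead one π s (some (∅, 0)) (u ++ [b])
        = seedStep one π s (seedRead one π s (some (∅, 0)) u) b := by
      simp [seedRead, List.foldl_append]
    rw [this]
    exact step_inv one π s hs hone u b _ ih

/-- Reading an alignment `w` from the initial state `⟨∅,0⟩` of `S_π` ends in the final
state iff there is a position `p`, `1 ≤ p`, `p + s - 1 ≤ |w|`, at which `π` matches `w`. -/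
theorem stmt_0 [DecidableEq A] (one : A) (π : ℕ → Finset A) (s : ℕ)
    (hs : 1 ≤ s) (hone : ∀ i, 1 ≤ i → i ≤ s → one ∈ π i) (w : List A) :
    seedRead one π s (some (∅, 0)) w = none ↔
      ∃ p, 1 ≤ p ∧ p + s - 1 ≤ w.length ∧ seedMatches one π s w p := by
  unfold seedMatches
  have hInv := read_inv one π s hs hone w
  cases hr : seedRead one π s (some (∅, 0)) w with
  | none =>
    rw [hr] at hInv
    obtain ⟨m, h1, h2, h3⟩ := hInv
    simp only [true_iff]
    refine ⟨m - s + 1, by omega, by omega, by omega, by omega, ?_⟩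
    intro i hi1 hi2
    have := h3 i hi1 hi2
    rwa [show m - s + 1 + i - 2 = m - s + i - 1 by omega]
  | some q =>
    rw [hr] at hInv
    have hnoFM := hInv.1
    constructor
    · intro hcontra
      exact absurd hcontra (by simp)
    · rintro ⟨p, hp1, hp2, _, hq2, hq3⟩
      exfalso
      apply hnoFM
      refine ⟨p + s - 1, by omega, by omega, ?_⟩
      intro i hi1 hi2
      have := hq3 i hi1 hi2
      rwa [show p + s - 1 - s + i - 1 = p + i - 2 by omega]
end

section
/- Let A = a_1⋯a_p ∈ 𝒜^* be a word such that π matches A at no position. Then reading A from the initial state of S_π ends in a non-final state ⟨X,t⟩, where t is the length of the longest suffix of A consisting only of the letter 1, and X = {x ∈ R_π : x ≤ p − t and π_1⋯π_x matches the length-x suffix of a_1⋯a_{p−t} at its starting position (i.e., a_{p−t−x+i} ∈ π_i for all i ∈ [1..x])}. -/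
/-!
Induct on the prefixes `u` of the word and split off the `t` trailing letters `1` of `u`, so that
the rest ends at position `n = |u| - t`. Since every `π_i` contains `1`, a window of `π_1⋯π_x`
ending at `n` slides over the trailing ones to windows ending later. Hence after reading a letter
`a ≠ 1` the windows ending at the new last position are those of length `y ≤ t + 1` with
`a ∈ π_y` together with those of length `x + t + 1` extending an old window `x ∈ X` with
`a ∈ π_{x+t+1}`: exactly the transition of `S_π`. After reading `1` nothing changes but `t`.
-/

variable {A : Type*}

section Window

variable (one : A) (π : ℕ → Finset A)

/-- `π_1⋯π_x` matches the `x` letters of `u` ending at the (1-based) position `m`;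
positions past the end of `u` read as `one`. -/
def WindowMatch (u : List A) (m x : ℕ) : Prop :=
  x ≤ m ∧ ∀ i, 1 ≤ i → i ≤ x → u.getD (m - x + i - 1) one ∈ π i

variable {one π}

lemma windowMatch_zero (u : List A) (m : ℕ) : WindowMatch one π u m 0 :=
  ⟨m.zero_le, fun _ _ hi => by omega⟩

lemma windowMatch_add_iff {s : ℕ} (hone : ∀ i, 1 ≤ i → i ≤ s → one ∈ π i) {u : List A}
    {m k x : ℕ} (hk : ∀ j, m ≤ j → j < m + k → u.getD j one = one) (hx : x ≤ s) :
    WindowMatch one π u (m + k) x ↔ WindowMatch one π u m (x - k) := by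
  constructor
  · rintro ⟨hxm, h⟩
    refine ⟨by omega, fun i hi hix => ?_⟩
    rw [show m - (x - k) + i - 1 = m + k - x + i - 1 by omega]
    exact h i hi (by omega)
  · rintro ⟨hxm, h⟩
    refine ⟨by omega, fun i hi hix => ?_⟩
    by_cases hj : m ≤ m + k - x + i - 1
    · rw [hk _ hj (by omega)]
      exact hone i hi (by omega)
    · rw [show m + k - x + i - 1 = m - (x - k) + i - 1 by omega]
      exact h i hi (by omega)

lemma windowMatch_append_singleton_iff {u : List A} {a : A} {x : ℕ} :
    WindowMatch one π (u ++ [a]) (u.length + 1) (x + 1) ↔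
      a ∈ π (x + 1) ∧ WindowMatch one π u u.length x := by
  have last : (u ++ [a]).getD u.length one = a := by
    rw [List.getD_append_right _ _ _ _ le_rfl, Nat.sub_self]
    rfl
  have inner : ∀ i, 1 ≤ i → i ≤ x → x ≤ u.length →
      (u ++ [a]).getD (u.length + 1 - (x + 1) + i - 1) one = u.getD (u.length - x + i - 1) one := by
    intro i hi hix hxu
    rw [List.getD_append _ _ _ _ (by omega)]
    congr 1
    omega
  constructor
  · rintro ⟨hxu, h⟩
    refine ⟨?_, by omega, fun i hi hix => ?_⟩
    · have := h (x + 1) (by omega) le_rfl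
      rwa [show u.length + 1 - (x + 1) + (x + 1) - 1 = u.length by omega, last] at this
    · rw [← inner i hi hix (by omega)]
      exact h i hi (by omega)
  · rintro ⟨ha, hxu, h⟩
    refine ⟨by omega, fun i hi hix => ?_⟩
    rcases Nat.lt_or_eq_of_le hix with hix | rfl
    · rw [inner i hi (by omega) hxu]
      exact h i hi (by omega)
    · rwa [show u.length + 1 - (x + 1) + (x + 1) - 1 = u.length by omega, last]

lemma seedMatches_of_windowMatch {s : ℕ} {w : List A} {m : ℕ}
    (h : WindowMatch one π w m s) (hm : m ≤ w.length) : seedMatches one π s w (m + 1 - s) := by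
  obtain ⟨hsm, h⟩ := h
  refine ⟨by omega, by omega, fun i hi his => ?_⟩
  rw [show m + 1 - s + i - 2 = m - s + i - 1 by omega]
  exact h i hi his

lemma seedMatches.append {s p : ℕ} {u : List A} (v : List A) (h : seedMatches one π s u p) :
    seedMatches one π s (u ++ v) p := by
  obtain ⟨hp, hps, h⟩ := h
  refine ⟨hp, by simp; omega, fun i hi his => ?_⟩
  rw [List.getD_append _ _ _ _ (by omega)]
  exact h i hi his

end Window

lemma List.getD_append_default_singleton (u : List A) (d : A) (j : ℕ) :
    (u ++ [d]).getD j d = u.getD j d := by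
  rcases lt_or_ge j u.length with hj | hj
  · exact List.getD_append _ _ _ _ hj
  · rw [List.getD_append_right _ _ _ _ hj, List.getD_eq_default _ _ hj]
    cases j - u.length <;> rfl

section TrailingOnes

variable [DecidableEq A] (one : A)

def trailingOnes (u : List A) : ℕ :=
  (u.reverse.takeWhile fun a => a = one).length

variable {one}

@[simp]
lemma trailingOnes_nil : trailingOnes one [] = 0 := rfl

@[simp]
lemma trailingOnes_append_one (u : List A) :
    trailingOnes one (u ++ [one]) = trailingOnes one u + 1 := by
  simp [trailingOnes]

lemma trailingOnes_append_of_ne (u : List A) {a : A} (ha : a ≠ one) :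
    trailingOnes one (u ++ [a]) = 0 := by
  simp [trailingOnes, ha]

lemma trailingOnes_le_length (u : List A) : trailingOnes one u ≤ u.length := by
  simpa [trailingOnes] using (List.takeWhile_prefix (l := u.reverse) (fun a => a = one)).length_le

lemma getD_eq_one_of_trailing {u : List A} {j : ℕ} (hj : u.length - trailingOnes one u ≤ j) :
    u.getD j one = one := by
  induction u using List.reverseRecOn generalizing j with
  | nil => rfl
  | append_singleton u a ih =>
    by_cases ha : a = one
    · subst ha
      rw [List.getD_append_default_singleton]
      exact ih (by simpa using hj)
    · rw [trailingOnes_append_of_ne u ha] at hj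
      exact List.getD_eq_default _ _ (by simpa using hj)

lemma getD_ne_one_before_trailing {u : List A} (h : trailingOnes one u < u.length) :
    u.getD (u.length - trailingOnes one u - 1) one ≠ one := by
  induction u using List.reverseRecOn with
  | nil => simp at h
  | append_singleton u a ih =>
    by_cases ha : a = one
    · subst ha
      simp only [trailingOnes_append_one, List.length_append, List.length_singleton,
        List.getD_append_default_singleton] at h ⊢
      rw [show u.length + 1 - (trailingOnes a u + 1) - 1 = u.length - trailingOnes a u - 1 by omega]
      exact ih (by omega)
    · rw [trailingOnes_append_of_ne u ha, List.length_append, List.length_singleton,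
        show u.length + 1 - 0 - 1 = u.length by omega,
        List.getD_append_right _ _ _ _ le_rfl, Nat.sub_self]
      exact ha

end TrailingOnes

section SeedState

variable [DecidableEq A] (one : A) (π : ℕ → Finset A) (s : ℕ)

open scoped Classical in
noncomputable def seedState (u : List A) : Finset ℕ × ℕ :=
  ({x ∈ Finset.Icc 1 s | π x ≠ {one} ∧ WindowMatch one π u (u.length - trailingOnes one u) x},
    trailingOnes one u)

variable {one π s}

lemma mem_seedState_fst {u : List A} {x : ℕ} :
    x ∈ (seedState one π s u).1 ↔ 1 ≤ x ∧ x ≤ s ∧ π x ≠ {one} ∧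
      WindowMatch one π u (u.length - trailingOnes one u) x := by
  simp only [seedState, Finset.mem_filter, Finset.mem_Icc, and_assoc]

@[simp]
lemma seedState_snd (u : List A) : (seedState one π s u).2 = trailingOnes one u := rfl

lemma seedState_nil : seedState one π s [] = (∅, 0) := by
  refine Prod.ext (Finset.ext fun x => ?_) rfl
  simp only [mem_seedState_fst, WindowMatch, Finset.notMem_empty, iff_false, List.length_nil,
    trailingOnes_nil]
  omega

lemma seedState_append_one (u : List A) :
    seedState one π s (u ++ [one]) = ((seedState one π s u).1, (seedState one π s u).2 + 1) := by
  refine Prod.ext (Finset.ext fun x => ?_) (trailingOnes_append_one u)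
  simp only [mem_seedState_fst, WindowMatch, List.getD_append_default_singleton,
    trailingOnes_append_one, List.length_append, List.length_singleton, Nat.add_sub_add_right]

lemma windowMatch_sup_seedState (u : List A) :
    WindowMatch one π u (u.length - trailingOnes one u) ((seedState one π s u).1.sup id) := by
  rcases (seedState one π s u).1.eq_empty_or_nonempty with h | h
  · rw [h, Finset.sup_empty]
    exact windowMatch_zero u _
  · obtain ⟨x, hx, hsup⟩ := Finset.exists_mem_eq_sup _ h id
    rw [hsup]
    exact (mem_seedState_fst.1 hx).2.2.2

/-- The invariant `max X + t < s` of `S_π`: otherwise the window of `max X` followed by the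
`t` trailing ones would contain a full match of `π`. -/
lemma sup_seedState_add_lt (hone : ∀ i, 1 ≤ i → i ≤ s → one ∈ π i) {u : List A}
    (hnm : ∀ p, ¬ seedMatches one π s u p) :
    (seedState one π s u).1.sup id + (seedState one π s u).2 < s := by
  set y := (seedState one π s u).1.sup id
  set t := trailingOnes one u
  have hys : y ≤ s := Finset.sup_le fun x hx => (mem_seedState_fst.1 hx).2.1
  have htu : t ≤ u.length := trailingOnes_le_length u
  change y + t < s
  by_contra! hst
  have hmatch : WindowMatch one π u (u.length - t + (s - y)) s := by
    rw [windowMatch_add_iff hone (fun j hj _ => getD_eq_one_of_trailing hj) le_rfl,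
      show s - (s - y) = y by omega]
    exact windowMatch_sup_seedState u
  exact hnm _ (seedMatches_of_windowMatch hmatch (by omega))

lemma ne_singleton_of_windowMatch {u : List A} {x : ℕ}
    (h : WindowMatch one π u (u.length - trailingOnes one u) x) (hx : 1 ≤ x) : π x ≠ {one} := by
  obtain ⟨hxu, h⟩ := h
  have hlast := h x hx le_rfl
  rw [show u.length - trailingOnes one u - x + x - 1 = u.length - trailingOnes one u - 1 by omega]
    at hlast
  intro heq
  rw [heq, Finset.mem_singleton] at hlast
  exact getD_ne_one_before_trailing (by omega) hlast

lemma mem_seedState_append_of_ne (hone : ∀ i, 1 ≤ i → i ≤ s → one ∈ π i) {u : List A} {a : A}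
    (ha : a ≠ one) {x : ℕ} :
    x + 1 ∈ (seedState one π s (u ++ [a])).1 ↔ x + 1 ≤ s ∧ a ∈ π (x + 1) ∧
      WindowMatch one π u (u.length - trailingOnes one u) (x - trailingOnes one u) := by
  have hlen : u.length - trailingOnes one u + trailingOnes one u = u.length :=
    Nat.sub_add_cancel (trailingOnes_le_length u)
  rw [mem_seedState_fst, trailingOnes_append_of_ne u ha, List.length_append,
    List.length_singleton, Nat.sub_zero, windowMatch_append_singleton_iff]
  constructor
  · rintro ⟨-, hxs, -, hax, hw⟩
    refine ⟨hxs, hax, ?_⟩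
    rwa [← windowMatch_add_iff hone (fun j hj _ => getD_eq_one_of_trailing hj) (by omega), hlen]
  · rintro ⟨hxs, hax, hw⟩
    refine ⟨by omega, hxs, fun h => ha (Finset.mem_singleton.1 (h ▸ hax)), hax, ?_⟩
    rwa [← hlen, windowMatch_add_iff hone (fun j hj _ => getD_eq_one_of_trailing hj) (by omega)]

lemma seedStep_set_eq_seedState_append (hone : ∀ i, 1 ≤ i → i ≤ s → one ∈ π i) {u : List A}
    {a : A} (ha : a ≠ one) (hts : trailingOnes one u < s) :
    ((Finset.Icc 1 (trailingOnes one u + 1)).filter fun x => a ∈ π x) ∪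
      (((seedState one π s u).1.filter fun x =>
          x + trailingOnes one u + 1 ≤ s ∧ a ∈ π (x + trailingOnes one u + 1)).image
        fun x => x + trailingOnes one u + 1) = (seedState one π s (u ++ [a])).1 := by
  set t := trailingOnes one u
  ext y
  rcases y with _ | x
  · simp [mem_seedState_fst]
  rw [mem_seedState_append_of_ne hone ha]
  simp only [Finset.mem_union, Finset.mem_filter, Finset.mem_Icc, Finset.mem_image,
    mem_seedState_fst]
  rcases le_or_gt x t with hxt | hxt
  · constructor
    · rintro (⟨-, hax⟩ | ⟨z, ⟨⟨hz1, -⟩, -⟩, hzx⟩)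
      · rw [Nat.sub_eq_zero_of_le hxt]
        exact ⟨by omega, hax, windowMatch_zero u _⟩
      · omega
    · rintro ⟨-, hax, -⟩
      exact Or.inl ⟨⟨by omega, by omega⟩, hax⟩
  · constructor
    · rintro (⟨⟨-, hxt'⟩, -⟩ | ⟨z, ⟨⟨-, -, -, hzw⟩, hzs, hza⟩, hzx⟩)
      · omega
      · obtain rfl : x = z + t := by omega
        rw [Nat.add_sub_cancel]
        exact ⟨hzs, hza, hzw⟩
    · rintro ⟨hxs, hax, hw⟩
      refine Or.inr ⟨x - t, ⟨⟨by omega, by omega, ne_singleton_of_windowMatch hw (by omega), hw⟩,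
        ?_⟩, by omega⟩
      rw [show x - t + t + 1 = x + 1 by omega]
      exact ⟨hxs, hax⟩

lemma seedStep_seedState (hone : ∀ i, 1 ≤ i → i ≤ s → one ∈ π i) {u : List A} {a : A}
    (hnm : ∀ p, ¬ seedMatches one π s (u ++ [a]) p) :
    seedStep one π s (some (seedState one π s u)) a = some (seedState one π s (u ++ [a])) := by
  have hlt := sup_seedState_add_lt hone hnm
  change seedStep one π s (some ((seedState one π s u).1, trailingOnes one u)) a = _
  by_cases ha : a = one
  · subst ha
    rw [seedState_append_one] at hlt ⊢
    simp only [seedState_snd] at hlt ⊢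
    simp only [seedStep, if_true]
    rw [if_neg hlt.ne]
  · have hts : trailingOnes one u < s :=
      (sup_seedState_add_lt hone fun p hp => hnm p (hp.append [a])).trans_le' (Nat.le_add_left _ _)
    simp only [seedStep, if_neg ha, seedStep_set_eq_seedState_append hone ha hts]
    rw [seedState_snd, trailingOnes_append_of_ne u ha, Nat.add_zero] at hlt
    rw [if_neg hlt.ne, ← trailingOnes_append_of_ne u ha]
    rfl

lemma seedRead_eq_seedState (hone : ∀ i, 1 ≤ i → i ≤ s → one ∈ π i) {u : List A}
    (hnm : ∀ p, ¬ seedMatches one π s u p) :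
    seedRead one π s (some (∅, 0)) u = some (seedState one π s u) := by
  induction u using List.reverseRecOn with
  | nil => rw [seedState_nil]; rfl
  | append_singleton u a ih =>
    rw [seedRead, List.foldl_concat]
    change seedStep one π s (seedRead one π s (some (∅, 0)) u) a = _
    rw [ih fun p hp => hnm p (hp.append [a])]
    exact seedStep_seedState hone hnm

end SeedState

theorem stmt_1_general [DecidableEq A] (one : A) (π : ℕ → Finset A) (s : ℕ)
    (hone : ∀ i, 1 ≤ i → i ≤ s → one ∈ π i) (w : List A)
    (hnomatch : ∀ p, ¬ seedMatches one π s w p) :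
    ∃ X t, seedRead one π s (some (∅, 0)) w = some (X, t) ∧
      t = (w.reverse.takeWhile fun a => a = one).length ∧
      ∀ x, x ∈ X ↔
        (1 ≤ x ∧ x ≤ s ∧ π x ≠ ({one} : Finset A) ∧ x ≤ w.length - t ∧
          ∀ i, 1 ≤ i → i ≤ x → w.getD (w.length - t - x + i - 1) one ∈ π i) :=
  ⟨_, _, seedRead_eq_seedState hone hnomatch, rfl, fun _ => mem_seedState_fst⟩

/-- If `π` matches `w` at no position, then reading `w` from the initial state of `S_π`
ends in a non-final state `⟨X,t⟩` where `t` is the length of the longest suffix of `w`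
made of the letter `1` only, and `X` is the set of non-`#` positions `x` of `π` such that
the prefix `π_1⋯π_x` matches the length-`x` suffix of `w₁⋯w_{p-t}` (with `p = |w|`). -/
theorem stmt_1 [DecidableEq A] (one : A) (π : ℕ → Finset A) (s : ℕ)
    (hs : 1 ≤ s) (hone : ∀ i, 1 ≤ i → i ≤ s → one ∈ π i) (w : List A)
    (hnomatch : ∀ p, ¬ seedMatches one π s w p) :
    ∃ X t, seedRead one π s (some (∅, 0)) w = some (X, t) ∧
      t = (w.reverse.takeWhile fun a => a = one).length ∧
      ∀ x, x ∈ X ↔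
        (1 ≤ x ∧ x ≤ s ∧ π x ≠ ({one} : Finset A) ∧ x ≤ w.length - t ∧
          ∀ i, 1 ≤ i → i ≤ x → w.getD (w.length - t - x + i - 1) one ∈ π i) :=
  stmt_1_general one π s hone w hnomatch
end

section
/- The total number of states of the subset seed automaton S_π (all non-final pairs ⟨X,t⟩ with X ⊆ R_π and max X + t ≤ s − 1, plus the single final state) is at most (w+1)·2^r, where w is the #-weight of π and r = s − w. -/
variable {A : Type*}

lemma seed_key_sum (s : ℕ) : ∀ n (R : Finset ℕ), R.card = n → R ⊆ Finset.Icc 1 s →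
    (∑ X ∈ R.powerset, (s - X.sup id)) + 1 ≤ (s - n + 1) * 2 ^ n := by
  intro n
  induction n with
  | zero =>
    intro R hcard hR
    rw [Finset.card_eq_zero] at hcard
    subst hcard
    simp
  | succ n ih =>
    intro R hcard hR
    have hne : R.Nonempty := by rw [← Finset.card_pos, hcard]; omega
    set a := R.max' hne with ha
    have haR : a ∈ R := R.max'_mem hne
    have hsub : R ⊆ Finset.Icc 1 a := by
      intro x hx
      rw [Finset.mem_Icc]
      exact ⟨(Finset.mem_Icc.1 (hR hx)).1, R.le_max' x hx⟩
    have hra : n + 1 ≤ a := by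
      have h := Finset.card_le_card hsub
      simpa [hcard] using h
    have has : a ≤ s := (Finset.mem_Icc.1 (hR haR)).2
    have hrs : n + 1 ≤ s := by
      have h := Finset.card_le_card hR
      simpa [hcard] using h
    have hanotin : a ∉ R.erase a := Finset.notMem_erase a R
    have hcard' : (R.erase a).card = n := by
      rw [Finset.card_erase_of_mem haR, hcard]; omega
    have hsub' : R.erase a ⊆ Finset.Icc 1 s := (Finset.erase_subset a R).trans hR
    have hIH := ih (R.erase a) hcard' hsub'
    have hR' : R = insert a (R.erase a) := (Finset.insert_erase haR).symm
    rw [hR', Finset.sum_powerset_insert hanotin]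
    have hsup : ∀ X ∈ (R.erase a).powerset, s - (insert a X).sup id = s - a := by
      intro X hX
      congr 1
      rw [Finset.sup_insert]
      have hXa : X.sup id ≤ a := Finset.sup_le fun x hx =>
        R.le_max' x (Finset.mem_of_mem_erase ((Finset.mem_powerset.1 hX) hx))
      exact sup_eq_left.mpr hXa
    rw [Finset.sum_congr rfl hsup, Finset.sum_const, Finset.card_powerset, hcard',
      smul_eq_mul]
    have h2 : (s - n + 1) + (s - a) ≤ (s - (n + 1) + 1) * 2 := by omega
    calc (∑ X ∈ (R.erase a).powerset, (s - X.sup id)) + 2 ^ n * (s - a) + 1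
        = ((∑ X ∈ (R.erase a).powerset, (s - X.sup id)) + 1) + 2 ^ n * (s - a) := by ring
      _ ≤ (s - n + 1) * 2 ^ n + 2 ^ n * (s - a) := Nat.add_le_add_right hIH _
      _ = ((s - n + 1) + (s - a)) * 2 ^ n := by ring
      _ ≤ ((s - (n + 1) + 1) * 2) * 2 ^ n := Nat.mul_le_mul_right _ h2
      _ = (s - (n + 1) + 1) * 2 ^ (n + 1) := by ring

/-- The total number of states of `S_π` (all non-final pairs `⟨X,t⟩` with `X ⊆ R_π` and
`max X + t ≤ s - 1`, plus the single final state) is at most `(w+1)·2^r`, where `w` is the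
`#`-weight of `π` and `r = s - w`. -/
theorem stmt_2 [DecidableEq A] (one : A) (π : ℕ → Finset A) (s : ℕ)
    (hs : 1 ≤ s) (hone : ∀ i, 1 ≤ i → i ≤ s → one ∈ π i) :
    ((((Finset.Icc 1 s).filter fun i => π i ≠ ({one} : Finset A)).powerset ×ˢ
          Finset.range s).filter fun Xt => Xt.1.sup id + Xt.2 ≤ s - 1).card + 1 ≤
      (((Finset.Icc 1 s).filter fun i => π i = ({one} : Finset A)).card + 1) *
        2 ^ (s - ((Finset.Icc 1 s).filter fun i => π i = ({one} : Finset A)).card) := by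
  set W : Finset ℕ := (Finset.Icc 1 s).filter fun i => π i = ({one} : Finset A) with hW
  set R : Finset ℕ := (Finset.Icc 1 s).filter fun i => π i ≠ ({one} : Finset A) with hRdef
  have hWR : W.card + R.card = s := by
    have h := Finset.card_filter_add_card_filter_not
      (s := Finset.Icc 1 s) (p := fun i => π i = ({one} : Finset A))
    simpa [hW, hRdef, Nat.card_Icc] using h
  have hRsub : R ⊆ Finset.Icc 1 s := Finset.filter_subset _ _
  have hcardLHS : ((R.powerset ×ˢ Finset.range s).filter
      fun Xt => Xt.1.sup id + Xt.2 ≤ s - 1).card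
      = ∑ X ∈ R.powerset, (s - X.sup id) := by
    rw [Finset.card_filter, Finset.sum_product]
    refine Finset.sum_congr rfl fun X hX => ?_
    have hXs : X.sup id ≤ s := Finset.sup_le fun x hx =>
      (Finset.mem_Icc.1 (hRsub ((Finset.mem_powerset.1 hX) hx))).2
    rw [← Finset.card_filter]
    have hfe : (Finset.range s).filter (fun t => X.sup id + t ≤ s - 1)
        = Finset.range (s - X.sup id) := by
      ext t
      simp only [Finset.mem_filter, Finset.mem_range]
      omega
    rw [hfe, Finset.card_range]
  rw [hcardLHS]
  have hkey := seed_key_sum s R.card R rfl hRsub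
  have h1 : s - R.card + 1 = W.card + 1 := by omega
  have h2 : R.card = s - W.card := by omega
  rw [h1, h2] at hkey
  exact hkey
end

section
/- Enumerate R_π = {z_1 < z_2 < ⋯ < z_r}. For every i ∈ [1..r], the number of non-final states ⟨X,t⟩ of S_π with max X = z_i is at most 2^{i−1}·(s − z_i), which in turn is at most 2^{i−1}·(s − i) (since z_i ≥ i). -/
variable {A : Type*}

/-- Enumerating `R_π = {z_1 < ⋯ < z_r}` (here `z : Fin r → ℕ`, 0-based, strictly monotone,
with range `R_π`), for every `i` the number of non-final states `⟨X,t⟩` of `S_π` with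
`max X = z_i` is at most `2^(i-1)·(s - z_i)`, which is at most `2^(i-1)·(s - i)`
(1-based `i`; with the 0-based index `i₀` these read `2^i₀·(s - z i₀) ≤ 2^i₀·(s - (i₀+1))`). -/
theorem stmt_3 [DecidableEq A] (one : A) (π : ℕ → Finset A) (s r : ℕ)
    (hs : 1 ≤ s) (hone : ∀ i, 1 ≤ i → i ≤ s → one ∈ π i)
    (hr : ((Finset.Icc 1 s).filter fun i => π i ≠ ({one} : Finset A)).card = r)
    (z : Fin r → ℕ) (hmono : StrictMono z)
    (hrange : ∀ x, x ∈ (Finset.Icc 1 s).filter (fun i => π i ≠ ({one} : Finset A)) ↔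
      ∃ i, z i = x)
    (i : Fin r) :
    ((((Finset.Icc 1 s).filter fun j => π j ≠ ({one} : Finset A)).powerset ×ˢ
            Finset.range s).filter
          fun Xt => Xt.1.sup id + Xt.2 ≤ s - 1 ∧ Xt.1.sup id = z i).card ≤
        2 ^ (i : ℕ) * (s - z i) ∧
      2 ^ (i : ℕ) * (s - z i) ≤ 2 ^ (i : ℕ) * (s - ((i : ℕ) + 1)) := by
  classical
  set R := (Finset.Icc 1 s).filter (fun j => π j ≠ ({one} : Finset A)) with hR
  have hziR : z i ∈ R := (hrange (z i)).mpr ⟨i, rfl⟩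
  obtain ⟨hzi_mem, -⟩ := Finset.mem_filter.mp hziR
  obtain ⟨hz1, hzs⟩ := Finset.mem_Icc.mp hzi_mem
  -- z j ≥ j + 1
  have hge : ∀ k (hk : k < r), k + 1 ≤ z ⟨k, hk⟩ := by
    intro k
    induction k with
    | zero =>
      intro hk
      have : z ⟨0, hk⟩ ∈ R := (hrange _).mpr ⟨_, rfl⟩
      obtain ⟨hm, -⟩ := Finset.mem_filter.mp this
      exact (Finset.mem_Icc.mp hm).1
    | succ k ih =>
      intro hk
      have hk' : k < r := Nat.lt_of_succ_lt hk
      have h1 := ih hk'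
      have h2 : z ⟨k, hk'⟩ < z ⟨k + 1, hk⟩ := hmono (by simp)
      omega
  have hgei : (i : ℕ) + 1 ≤ z i := by
    have := hge i i.isLt
    simpa using this
  constructor
  · -- counting bound
    set Q := (R.filter (fun x => x < z i)).powerset ×ˢ Finset.range (s - z i) with hQ
    have hmaps : ∀ Xt ∈ (R.powerset ×ˢ Finset.range s).filter
        (fun Xt => Xt.1.sup id + Xt.2 ≤ s - 1 ∧ Xt.1.sup id = z i),
        (Xt.1.erase (z i), Xt.2) ∈ Q := by
      intro Xt hXt
      obtain ⟨hmem, hsum, hsup⟩ := Finset.mem_filter.mp hXt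
      obtain ⟨hX, ht⟩ := Finset.mem_product.mp hmem
      have hXsub := Finset.mem_powerset.mp hX
      refine Finset.mem_product.mpr ⟨Finset.mem_powerset.mpr ?_, ?_⟩
      · intro x hx
        obtain ⟨hxne, hxX⟩ := Finset.mem_erase.mp hx
        refine Finset.mem_filter.mpr ⟨hXsub hxX, ?_⟩
        have : x ≤ Xt.1.sup id := Finset.le_sup (f := id) hxX
        rw [hsup] at this
        omega
      · rw [Finset.mem_range]
        omega
    have hzin : ∀ Xt ∈ (R.powerset ×ˢ Finset.range s).filter
        (fun Xt => Xt.1.sup id + Xt.2 ≤ s - 1 ∧ Xt.1.sup id = z i), z i ∈ Xt.1 := by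
      intro Xt hXt
      obtain ⟨hmem, hsum, hsup⟩ := Finset.mem_filter.mp hXt
      have hne : Xt.1.Nonempty := by
        rcases Finset.eq_empty_or_nonempty Xt.1 with h | h
        · rw [h] at hsup; simp at hsup; omega
        · exact h
      obtain ⟨b, hb, hbeq⟩ := Finset.exists_mem_eq_sup Xt.1 hne id
      have hb2 : b = z i := by rw [hbeq] at hsup; exact hsup
      rwa [← hb2]
    have hinj : Set.InjOn (fun Xt : Finset ℕ × ℕ => (Xt.1.erase (z i), Xt.2))
        ((R.powerset ×ˢ Finset.range s).filter
          (fun Xt => Xt.1.sup id + Xt.2 ≤ s - 1 ∧ Xt.1.sup id = z i)) := by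
      intro a ha b hb hab
      have h1 := hzin a ha
      have h2 := hzin b hb
      simp only [Prod.mk.injEq] at hab
      obtain ⟨he, ht⟩ := hab
      have : a.1 = b.1 := by
        rw [← Finset.insert_erase h1, ← Finset.insert_erase h2, he]
      exact Prod.ext this ht
    have hcard := Finset.card_le_card_of_injOn _ hmaps hinj
    have hQcard : Q.card = 2 ^ (R.filter (fun x => x < z i)).card * (s - z i) := by
      rw [hQ, Finset.card_product, Finset.card_powerset, Finset.card_range]
    have hfcard : (R.filter (fun x => x < z i)).card ≤ (i : ℕ) := by
      have hsub : R.filter (fun x => x < z i) ⊆ Finset.image z (Finset.Iio i) := by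
        intro x hx
        obtain ⟨hxR, hxlt⟩ := Finset.mem_filter.mp hx
        obtain ⟨j, hj⟩ := (hrange x).mp hxR
        refine Finset.mem_image.mpr ⟨j, ?_, hj⟩
        rw [Finset.mem_Iio]
        have : z j < z i := by rw [hj]; exact hxlt
        exact hmono.lt_iff_lt.mp this
      calc (R.filter (fun x => x < z i)).card
          ≤ (Finset.image z (Finset.Iio i)).card := Finset.card_le_card hsub
        _ ≤ (Finset.Iio i).card := Finset.card_image_le
        _ = (i : ℕ) := by simp
    calc _ ≤ Q.card := hcard
      _ = 2 ^ (R.filter (fun x => x < z i)).card * (s - z i) := hQcard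
      _ ≤ 2 ^ (i : ℕ) * (s - z i) := by
          exact Nat.mul_le_mul_right _ (Nat.pow_le_pow_right (by norm_num) hfcard)
  · exact Nat.mul_le_mul_left _ (Nat.sub_le_sub_left hgei s)
end

section
/- If the seed starts with #, i.e. π_1 = # (so every element z_i of R_π = {z_1 < ⋯ < z_r} satisfies z_i ≥ i+1), then the number of non-final states of the subset seed automaton S_π is at most w·2^r, where w is the #-weight of π and r = s − w. -/
variable {A : Type*}

lemma sumSupBound (R : Finset ℕ) (s : ℕ) (hR : ∀ x ∈ R, 2 ≤ x ∧ x ≤ s) :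
    ∑ X ∈ R.powerset, (s - X.sup id) ≤ (s - R.card) * 2 ^ R.card := by
  induction R using Finset.strongInduction with
  | _ R ih =>
    rcases R.eq_empty_or_nonempty with rfl | hne
    · simp
    · obtain ⟨m, hm, hmax⟩ := R.exists_max_image id hne
      have hm2 : 2 ≤ m := (hR m hm).1
      have hms : m ≤ s := (hR m hm).2
      have hins : R = insert m (R.erase m) := (Finset.insert_erase hm).symm
      have hnotmem : m ∉ R.erase m := Finset.notMem_erase m R
      -- max lower bound: m ≥ card R + 1
      have hsubIcc : R ⊆ Finset.Icc 2 m := by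
        intro x hx; exact Finset.mem_Icc.mpr ⟨(hR x hx).1, hmax x hx⟩
      have hcardle : R.card ≤ m - 1 := by
        calc R.card ≤ (Finset.Icc 2 m).card := Finset.card_le_card hsubIcc
        _ = m - 1 := by rw [Nat.card_Icc]; omega
      have hmlb : R.card + 1 ≤ m := by omega
      have hr1 : 1 ≤ R.card := Finset.card_pos.mpr hne
      have hcins : (insert m (R.erase m)).card = R.card := by rw [← hins]
      conv_lhs => rw [hins]
      rw [Finset.sum_powerset_insert hnotmem]
      have hsupins : ∀ t ∈ (R.erase m).powerset, s - (insert m t).sup id = s - m := by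
        intro t ht
        have hts : t ⊆ R.erase m := Finset.mem_powerset.mp ht
        have : (insert m t).sup id = m := by
          apply le_antisymm
          · apply Finset.sup_le
            intro x hx
            rcases Finset.mem_insert.mp hx with rfl | hx
            · exact le_rfl
            · exact hmax x (Finset.mem_of_mem_erase (hts hx))
          · exact Finset.le_sup (f := id) (Finset.mem_insert_self m t)
        rw [this]
      rw [Finset.sum_congr rfl hsupins, Finset.sum_const, Finset.card_powerset, smul_eq_mul]
      have hIH : ∑ X ∈ (R.erase m).powerset, (s - X.sup id) ≤
          (s - (R.erase m).card) * 2 ^ (R.erase m).card :=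
        ih _ (Finset.erase_ssubset hm) (fun x hx => hR x (Finset.mem_of_mem_erase hx))
      have hec : (R.erase m).card = R.card - 1 := Finset.card_erase_of_mem hm
      rw [hec] at hIH ⊢
      have hkey : (s - (R.card - 1)) + (s - m) ≤ 2 * (s - R.card) := by omega
      calc ∑ X ∈ (R.erase m).powerset, (s - X.sup id) + 2 ^ (R.card - 1) * (s - m)
          ≤ (s - (R.card - 1)) * 2 ^ (R.card - 1) + 2 ^ (R.card - 1) * (s - m) := by
            exact Nat.add_le_add_right hIH _
        _ = ((s - (R.card - 1)) + (s - m)) * 2 ^ (R.card - 1) := by ring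
        _ ≤ (2 * (s - R.card)) * 2 ^ (R.card - 1) := Nat.mul_le_mul_right _ hkey
        _ = (s - R.card) * 2 ^ R.card := by
            obtain ⟨k, hk⟩ : ∃ k, R.card = k + 1 := ⟨R.card - 1, by omega⟩
            rw [hk]; simp [pow_succ]; ring

/-- If the seed starts with `#` (`π_1 = {1}`), the number of non-final states of `S_π` is
at most `w·2^r`, where `w` is the `#`-weight of `π` and `r = s - w`. -/
theorem stmt_4 [DecidableEq A] (one : A) (π : ℕ → Finset A) (s : ℕ)
    (hs : 1 ≤ s) (hone : ∀ i, 1 ≤ i → i ≤ s → one ∈ π i)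
    (hfirst : π 1 = ({one} : Finset A)) :
    ((((Finset.Icc 1 s).filter fun i => π i ≠ ({one} : Finset A)).powerset ×ˢ
          Finset.range s).filter fun Xt => Xt.1.sup id + Xt.2 ≤ s - 1).card ≤
      ((Finset.Icc 1 s).filter fun i => π i = ({one} : Finset A)).card *
        2 ^ (s - ((Finset.Icc 1 s).filter fun i => π i = ({one} : Finset A)).card) := by
  set R := (Finset.Icc 1 s).filter fun i => π i ≠ ({one} : Finset A) with hRdef
  set W := (Finset.Icc 1 s).filter fun i => π i = ({one} : Finset A) with hWdef
  have hWR : W.card + R.card = s := by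
    have := Finset.card_filter_add_card_filter_not
      (s := Finset.Icc 1 s) (p := fun i => π i = ({one} : Finset A))
    simpa [Nat.card_Icc, hWdef, hRdef] using this
  have hRmem : ∀ x ∈ R, 2 ≤ x ∧ x ≤ s := by
    intro x hx
    rw [hRdef, Finset.mem_filter, Finset.mem_Icc] at hx
    refine ⟨?_, hx.1.2⟩
    rcases Nat.lt_or_ge x 2 with h | h
    · interval_cases x
      · omega
      · exact absurd hfirst hx.2
    · exact h
  have key : ((R.powerset ×ˢ Finset.range s).filter fun Xt => Xt.1.sup id + Xt.2 ≤ s - 1).card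
      = ∑ X ∈ R.powerset, (s - X.sup id) := by
    rw [Finset.card_filter, Finset.sum_product]
    refine Finset.sum_congr rfl fun X hX => ?_
    rw [← Finset.card_filter]
    have : (Finset.range s).filter (fun t => X.sup id + t ≤ s - 1) = Finset.range (s - X.sup id) := by
      ext t
      simp only [Finset.mem_filter, Finset.mem_range]
      omega
    rw [this, Finset.card_range]
  rw [key]
  calc ∑ X ∈ R.powerset, (s - X.sup id) ≤ (s - R.card) * 2 ^ R.card := sumSupBound R s hRmem
    _ = W.card * 2 ^ (s - W.card) := by
        have h1 : s - R.card = W.card := by omega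
        have h2 : R.card = s - W.card := by omega
        rw [h1, h2]
end

section
/- For the seed π = #_⋯_# (one #, then r letters _, then one #) over 𝒜 = {0,1}, every state of the subset seed automaton S_π is reachable: for each non-final state ⟨X,t⟩ with X ⊆ {2,…,r+1} and max X + t ≤ r+1 there is a word in {0,1}^* which, read from the initial state ⟨∅,0⟩, ends in ⟨X,t⟩, and likewise the final state is reachable. -/
variable {A : Type*}

/-- The seed `#_⋯_#` (one `#`, then `r` letters `_`, then one `#`) over the alphabet
`𝒜 = {0,1}` modelled by `Bool` with `1 = true` and `0 = false`: position `1` and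
position `r+2` carry `# = {1}`, all other positions carry `_ = {0,1}`.
Its span is `s = r+2` and `R_π = {2,…,r+1}`. -/
def hrSeed (r : ℕ) : ℕ → Finset Bool :=
  fun i => if i = 1 ∨ i = r + 2 then {true} else {false, true}

/-!
Reading `1ᵗ0` from `⟨Y,0⟩` leads to `⟨{2,…,t+1} ∪ (Y + (t+1)), 0⟩`. Conversely, every
`X ⊆ {2,…,r+1}` splits as its initial run `{2,…,t+1}` (possibly empty) followed, after the
gap at `t+2`, by a translate `Y + (t+1)` with `Y ⊆ {2,…}` and `max Y < max X`; so all states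
`⟨X,0⟩` are reachable by induction on `max X`. Further `1`s raise `t`, and `1^(r+2)` reaches
the final state.
-/

section SeedAutomaton

variable [DecidableEq A] (one : A) (π : ℕ → Finset A) (s : ℕ)

def SeedReachable (q : Option (Finset ℕ × ℕ)) : Prop :=
  ∃ w : List A, seedRead one π s (some (∅, 0)) w = q

variable {one π s}

theorem SeedReachable.initial : SeedReachable one π s (some (∅, 0)) :=
  ⟨[], rfl⟩

theorem seedRead_append (q : Option (Finset ℕ × ℕ)) (w v : List A) :
    seedRead one π s q (w ++ v) = seedRead one π s (seedRead one π s q w) v :=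
  List.foldl_append

theorem SeedReachable.read {q : Option (Finset ℕ × ℕ)} (h : SeedReachable one π s q)
    (w : List A) : SeedReachable one π s (seedRead one π s q w) := by
  obtain ⟨v, rfl⟩ := h
  exact ⟨v ++ w, seedRead_append _ v w⟩

theorem seedRead_none (w : List A) : seedRead one π s none w = none := by
  induction w with
  | nil => rfl
  | cons a w ih => exact ih

theorem seedStep_some_one (X : Finset ℕ) (t : ℕ) :
    seedStep one π s (some (X, t)) one =
      if X.sup id + (t + 1) = s then none else some (X, t + 1) := by
  simp [seedStep]

theorem seedRead_replicate_one {X : Finset ℕ} {t : ℕ} (h : X.sup id + t < s) (n : ℕ) :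
    seedRead one π s (some (X, t)) (List.replicate n one) =
      if X.sup id + t + n < s then some (X, t + n) else none := by
  induction n generalizing t with
  | zero => simp [seedRead, h]
  | succ n ih =>
    change seedRead one π s (seedStep one π s (some (X, t)) one) (List.replicate n one) = _
    by_cases hs : X.sup id + (t + 1) = s
    · rw [seedStep_some_one, if_pos hs, seedRead_none, if_neg (by omega)]
    · rw [seedStep_some_one, if_neg hs, ih (by omega)]
      simp only [← add_assoc, Nat.add_right_comm _ 1 n]

end SeedAutomaton

theorem false_mem_hrSeed {r x : ℕ} : false ∈ hrSeed r x ↔ x ≠ 1 ∧ x ≠ r + 2 := by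
  unfold hrSeed
  split_ifs <;> simp <;> omega

theorem seedStep_hrSeed_false {r t : ℕ} {X : Finset ℕ} (ht : t ≤ r)
    (hX : ∀ x ∈ X, 1 ≤ x ∧ x + t + 1 ≤ r + 1) :
    seedStep true (hrSeed r) (r + 2) (some (X, t)) false =
      some (Finset.Icc 2 (t + 1) ∪ X.image (· + (t + 1)), 0) := by
  have hrun : (Finset.Icc 1 (t + 1)).filter (false ∈ hrSeed r ·) = Finset.Icc 2 (t + 1) := by
    ext x
    simp only [Finset.mem_filter, Finset.mem_Icc, false_mem_hrSeed]
    omega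
  have hshift : X.filter (fun x => x + t + 1 ≤ r + 2 ∧ false ∈ hrSeed r (x + t + 1)) = X := by
    refine Finset.filter_true_of_mem fun x hx => ?_
    have := hX x hx
    rw [false_mem_hrSeed]
    omega
  have hsup : (Finset.Icc 2 (t + 1) ∪ X.image (· + (t + 1))).sup id ≤ r + 1 := by
    refine Finset.sup_le fun x hx => ?_
    simp only [Finset.mem_union, Finset.mem_Icc, Finset.mem_image] at hx
    simp only [id]
    rcases hx with hx | ⟨y, hy, rfl⟩
    · omega
    · have := (hX y hy).2
      omega
  have hshift_fun : (fun x => x + t + 1) = (· + (t + 1)) := rfl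
  simp only [seedStep, Bool.false_eq_true, if_false, hrun, hshift, hshift_fun]
  rw [if_neg (by omega)]

theorem SeedReachable.hrSeed_Icc_union_image_add {r t : ℕ} {Y : Finset ℕ}
    (h : SeedReachable true (hrSeed r) (r + 2) (some (Y, 0)))
    (ht : t ≤ r) (hY : ∀ y ∈ Y, 1 ≤ y ∧ y + t + 1 ≤ r + 1) :
    SeedReachable true (hrSeed r) (r + 2)
      (some (Finset.Icc 2 (t + 1) ∪ Y.image (· + (t + 1)), 0)) := by
  have hsup : Y.sup id + t + 1 ≤ r + 1 := by
    have : Y.sup id ≤ r - t := Finset.sup_le fun y hy => by have := hY y hy; simp only [id]; omega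
    omega
  have hread := h.read (List.replicate t true ++ [false])
  rwa [seedRead_append, seedRead_replicate_one (by omega), if_pos (by omega), zero_add,
    seedRead, List.foldl_cons, List.foldl_nil, seedStep_hrSeed_false ht hY] at hread

theorem exists_eq_Icc_union_image_add {X : Finset ℕ} (hX : ∀ x ∈ X, 2 ≤ x) :
    ∃ (t : ℕ) (Y : Finset ℕ),
      (∀ y ∈ Y, 2 ≤ y) ∧ X = Finset.Icc 2 (t + 1) ∪ Y.image (· + (t + 1)) := by
  have hgap : ∃ k, k + 2 ∉ X := ⟨X.sup id, fun h => by
    have := Finset.le_sup (f := id) h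
    simp only [id] at this
    omega⟩
  classical
  set t := Nat.find hgap
  have ht : t + 2 ∉ X := Nat.find_spec hgap
  have hrun : ∀ k < t, k + 2 ∈ X := fun k hk => not_not.mp (Nat.find_min hgap hk)
  refine ⟨t, (X.filter (t + 2 < ·)).image (· - (t + 1)), ?_, ?_⟩
  · simp only [Finset.mem_image, Finset.mem_filter]
    rintro _ ⟨x, ⟨-, hx⟩, rfl⟩
    omega
  · ext x
    simp only [Finset.mem_union, Finset.mem_Icc, Finset.mem_image, Finset.mem_filter]
    constructor
    · intro hx
      have := hX x hx
      by_cases hxt : x ≤ t + 1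
      · exact Or.inl ⟨this, hxt⟩
      · have hne : x ≠ t + 2 := by rintro rfl; exact ht hx
        exact Or.inr ⟨x - (t + 1), ⟨x, ⟨hx, by omega⟩, rfl⟩, by omega⟩
    · rintro (⟨h2, hxt⟩ | ⟨_, ⟨y, ⟨hy, hyt⟩, rfl⟩, rfl⟩)
      · simpa [Nat.sub_add_cancel h2] using hrun (x - 2) (by omega)
      · rwa [Nat.sub_add_cancel (by omega)]

theorem hrSeed_reachable_of_subset {r : ℕ} (X : Finset ℕ) (hX : X ⊆ Finset.Icc 2 (r + 1)) :
    SeedReachable true (hrSeed r) (r + 2) (some (X, 0)) := by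
  induction hm : X.sup id using Nat.strong_induction_on generalizing X with
  | _ m ih =>
  rcases X.eq_empty_or_nonempty with rfl | hne
  · exact SeedReachable.initial
  have hX2 : ∀ x ∈ X, 2 ≤ x ∧ x ≤ r + 1 := fun x hx => Finset.mem_Icc.mp (hX hx)
  obtain ⟨t, Y, hY2, rfl⟩ := exists_eq_Icc_union_image_add fun x hx => (hX2 x hx).1
  have hYX : ∀ y ∈ Y, 2 ≤ y ∧ y + (t + 1) ≤ r + 1 ∧ y + (t + 1) ≤ m := fun y hy => by
    have hmem : y + (t + 1) ∈ Finset.Icc 2 (t + 1) ∪ Y.image (· + (t + 1)) :=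
      Finset.mem_union_right _ (Finset.mem_image_of_mem _ hy)
    exact ⟨hY2 y hy, (hX2 _ hmem).2, hm ▸ Finset.le_sup (f := id) hmem⟩
  have hYm : Y.sup id < m := by
    obtain ⟨x, hx⟩ := hne
    have : 2 ≤ m := hm ▸ (hX2 x hx).1.trans (Finset.le_sup (f := id) hx)
    refine (Finset.sup_lt_iff (by rw [Nat.bot_eq_zero]; omega)).mpr fun y hy => ?_
    have := hYX y hy
    simp only [id]
    omega
  have hYsub : Y ⊆ Finset.Icc 2 (r + 1) := fun y hy => by
    have := hYX y hy
    exact Finset.mem_Icc.mpr ⟨this.1, by omega⟩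
  have ht : t ≤ r := by
    rcases Nat.eq_zero_or_pos t with h0 | hpos
    · omega
    · have := (hX2 (t + 1) (Finset.mem_union_left _ (Finset.mem_Icc.mpr ⟨by omega, le_rfl⟩))).2
      omega
  exact (ih _ hYm Y hYsub rfl).hrSeed_Icc_union_image_add ht fun y hy => by have := hYX y hy; omega

/-- For the seed `π = #_⋯_#` over `{0,1}`, every state of `S_π` is reachable: every
non-final state `⟨X,t⟩` (with `X ⊆ {2,…,r+1}` and `max X + t ≤ r+1 = s-1`) is reached by
some word read from the initial state `⟨∅,0⟩`, and so is the final state. -/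
theorem stmt_5 (r : ℕ) :
    (∀ (X : Finset ℕ) (t : ℕ), X ⊆ Finset.Icc 2 (r + 1) → X.sup id + t ≤ r + 1 →
      ∃ w : List Bool, seedRead true (hrSeed r) (r + 2) (some (∅, 0)) w = some (X, t)) ∧
    ∃ w : List Bool, seedRead true (hrSeed r) (r + 2) (some (∅, 0)) w = none := by
  constructor
  · intro X t hX hsup
    have hread := (hrSeed_reachable_of_subset X hX).read (List.replicate t true)
    rwa [seedRead_replicate_one (by omega), if_pos (by omega), zero_add] at hread
  · have hread := (SeedReachable.initial (one := true) (π := hrSeed r) (s := r + 2)).read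
      (List.replicate (r + 2) true)
    rwa [seedRead_replicate_one (by simp), if_neg (by simp)] at hread
end

section
/- For the seed π = #_⋯_# over 𝒜 = {0,1}, let q' = ⟨X',t'⟩ and q'' = ⟨X'',t''⟩ be non-final states of S_π with max X' + t' > max X'' + t'' (where max ∅ = 0), and set d = (r+2) − (max X' + t'). Then reading the word 1^d from q' ends in the final state, while reading 1^d from q'' ends in a non-final state. -/
variable {A : Type*}

lemma read_ones_lt [DecidableEq A] (one : A) (π : ℕ → Finset A) (s : ℕ) :
    ∀ (k : ℕ) (X : Finset ℕ) (t : ℕ), X.sup id + t + k < s →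
      seedRead one π s (some (X, t)) (List.replicate k one) = some (X, t + k) := by
  intro k
  induction k with
  | zero => intro X t h; rfl
  | succ k ih =>
    intro X t h
    rw [List.replicate_succ]
    simp only [seedRead, List.foldl_cons]
    have h1 : X.sup id + (t + 1) ≠ s := by omega
    rw [show seedStep one π s (some (X, t)) one = some (X, t + 1) by
      simp [seedStep, h1]]
    have := ih X (t + 1) (by omega)
    simpa [seedRead, show t + 1 + k = t + (k + 1) by omega] using this

lemma read_ones_eq [DecidableEq A] (one : A) (π : ℕ → Finset A) (s : ℕ) :
    ∀ (k : ℕ) (X : Finset ℕ) (t : ℕ), X.sup id + t + k = s → 1 ≤ k →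
      seedRead one π s (some (X, t)) (List.replicate k one) = none := by
  intro k
  induction k with
  | zero => omega
  | succ k ih =>
    intro X t h _
    rw [List.replicate_succ]
    simp only [seedRead, List.foldl_cons]
    rcases Nat.eq_zero_or_pos k with hk | hk
    · subst hk
      have h1 : X.sup id + (t + 1) = s := by omega
      rw [show seedStep one π s (some (X, t)) one = none by simp [seedStep, h1]]
      rfl
    · have h1 : X.sup id + (t + 1) ≠ s := by omega
      rw [show seedStep one π s (some (X, t)) one = some (X, t + 1) by
        simp [seedStep, h1]]
      exact ih X (t + 1) (by omega) hk

/-- For the seed `π = #_⋯_#` over `{0,1}`, if `⟨X',t'⟩` and `⟨X'',t''⟩` are non-final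
states with `max X' + t' > max X'' + t''` and `d = (r+2) - (max X' + t')`, then reading
`1^d` from `⟨X',t'⟩` ends in the final state while reading `1^d` from `⟨X'',t''⟩` does not. -/
theorem stmt_8 (r : ℕ) (X' X'' : Finset ℕ) (t' t'' : ℕ)
    (hX' : X' ⊆ Finset.Icc 2 (r + 1)) (hb' : X'.sup id + t' ≤ r + 1)
    (hX'' : X'' ⊆ Finset.Icc 2 (r + 1)) (hb'' : X''.sup id + t'' ≤ r + 1)
    (hgt : X''.sup id + t'' < X'.sup id + t') :
    seedRead true (hrSeed r) (r + 2) (some (X', t'))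
        (List.replicate ((r + 2) - (X'.sup id + t')) true) = none ∧
      seedRead true (hrSeed r) (r + 2) (some (X'', t''))
        (List.replicate ((r + 2) - (X'.sup id + t')) true) ≠ none := by
  constructor
  · exact read_ones_eq true (hrSeed r) (r + 2) _ X' t' (by omega) (by omega)
  · rw [read_ones_lt true (hrSeed r) (r + 2) _ X'' t'' (by omega)]
    simp
end

section
/- The number of states of the subset seed automaton S_π that are reachable from its initial state is at most the number of states of the Aho–Corasick automaton of π (counting its merged final state as one state); in other words, S_π never has more reachable states than the Aho–Corasick automaton. -/
variable {A : Type*}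

/-!
Reading a word `W` from the initial state, the seed automaton is in its final state iff `π`
occurs in `W`; otherwise it is in the state `⟨X, t⟩` where `t` is the number of trailing `1`s
of `W` and `X` is the set of `x ∈ [1, s]` such that the suffix of `W` of length `x + t` is
matched by the corresponding prefix of `π`. The longest matching suffix `B` of `W` has length
`max X + t < s`, and it already determines `t` and `X`. So `B`, which is exactly the
Aho–Corasick state reached on `W`, is a word of `Q_AC` whose reading leads `S_π` to the same
state as `W`: the reachable states of `S_π` are the image of the states of `Q_AC`.
-/

namespace SubsetSeed

def MatchesPrefix (π : ℕ → Finset A) (B : List A) : Prop :=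
  ∀ i (h : i < B.length), B[i] ∈ π (i + 1)

def HasMatchingSuffix (π : ℕ → Finset A) (W : List A) (ℓ : ℕ) : Prop :=
  ∃ B, B <:+ W ∧ B.length = ℓ ∧ MatchesPrefix π B

def HasOccurrence (π : ℕ → Finset A) (s : ℕ) (W : List A) : Prop :=
  ∃ B, B <:+: W ∧ B.length = s ∧ MatchesPrefix π B

def trailingOnes [DecidableEq A] (one : A) (W : List A) : ℕ :=
  (W.reverse.takeWhile (· == one)).length

open Classical in
noncomputable def seedSet [DecidableEq A] (one : A) (π : ℕ → Finset A) (s : ℕ) (W : List A) :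
    Finset ℕ :=
  (Finset.Icc 1 s).filter fun x => HasMatchingSuffix π W (x + trailingOnes one W)

section Words

variable {π : ℕ → Finset A} {s ℓ : ℕ} {a : A} {B W : List A}

theorem matchesPrefix_append_singleton :
    MatchesPrefix π (B ++ [a]) ↔ MatchesPrefix π B ∧ a ∈ π (B.length + 1) := by
  constructor
  · intro h
    refine ⟨fun i hi => ?_, by simpa using h B.length (by simp)⟩
    rw [← List.getElem_append_left hi]
    exact h i (by simp; omega)
  · rintro ⟨hB, ha⟩ i hi
    rw [List.getElem_append]
    split_ifs with hlt
    · exact hB i hlt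
    · obtain rfl : i = B.length := by simp at hi; omega
      simpa using ha

theorem MatchesPrefix.take (h : MatchesPrefix π B) (n : ℕ) : MatchesPrefix π (B.take n) :=
  fun i hi => by simpa using h i (by simp at hi; omega)

theorem hasMatchingSuffix_zero : HasMatchingSuffix π W 0 :=
  ⟨[], List.nil_suffix, rfl, fun _ h => absurd h (Nat.not_lt_zero _)⟩

theorem HasMatchingSuffix.le_length (h : HasMatchingSuffix π W ℓ) : ℓ ≤ W.length := by
  obtain ⟨B, hB, rfl, -⟩ := h
  exact hB.length_le

theorem hasMatchingSuffix_append_singleton_succ :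
    HasMatchingSuffix π (W ++ [a]) (ℓ + 1) ↔
      HasMatchingSuffix π W ℓ ∧ a ∈ π (ℓ + 1) := by
  constructor
  · rintro ⟨C, hC, hlen, hm⟩
    obtain rfl | ⟨B, rfl, hB⟩ := List.suffix_concat_iff.mp hC
    · simp at hlen
    · simp only [List.length_append, List.length_singleton, Nat.add_right_cancel_iff] at hlen
      rw [matchesPrefix_append_singleton, hlen] at hm
      exact ⟨⟨B, hB, hlen, hm.1⟩, hm.2⟩
  · rintro ⟨⟨B, hB, rfl, hm⟩, ha⟩
    exact ⟨B ++ [a], List.suffix_concat_iff.mpr (Or.inr ⟨B, rfl, hB⟩), by simp,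
      matchesPrefix_append_singleton.mpr ⟨hm, ha⟩⟩

theorem hasMatchingSuffix_iff_of_suffix (hB : B <:+ W) (hℓ : ℓ ≤ B.length) :
    HasMatchingSuffix π B ℓ ↔ HasMatchingSuffix π W ℓ :=
  ⟨fun ⟨C, hC, hlen, hm⟩ => ⟨C, hC.trans hB, hlen, hm⟩,
    fun ⟨C, hC, hlen, hm⟩ =>
      ⟨C, List.suffix_of_suffix_length_le hC hB (hlen ▸ hℓ), hlen, hm⟩⟩

theorem HasOccurrence.mono (h : HasOccurrence π s B) (hB : B <:+: W) : HasOccurrence π s W :=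
  let ⟨C, hC, hlen, hm⟩ := h
  ⟨C, hC.trans hB, hlen, hm⟩

theorem HasMatchingSuffix.hasOccurrence (h : HasMatchingSuffix π W ℓ) (hsℓ : s ≤ ℓ) :
    HasOccurrence π s W := by
  obtain ⟨C, hC, rfl, hm⟩ := h
  exact ⟨C.take s, (List.take_prefix s C).isInfix.trans hC.isInfix, by simpa using hsℓ,
    hm.take s⟩

theorem HasMatchingSuffix.lt_of_not_hasOccurrence (h : HasMatchingSuffix π W ℓ)
    (hW : ¬HasOccurrence π s W) : ℓ < s :=
  Nat.lt_of_not_le fun hsℓ => hW (h.hasOccurrence hsℓ)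

theorem hasOccurrence_append_singleton :
    HasOccurrence π s (W ++ [a]) ↔
      HasOccurrence π s W ∨ HasMatchingSuffix π (W ++ [a]) s := by
  constructor
  · rintro ⟨C, hC, hlen, hm⟩
    rcases List.infix_concat_iff.mp hC with hC | hC
    · exact Or.inr ⟨C, hC, hlen, hm⟩
    · exact Or.inl ⟨C, hC, hlen, hm⟩
  · rintro (h | h)
    · exact h.mono (List.prefix_append W [a]).isInfix
    · exact h.hasOccurrence le_rfl

theorem not_hasOccurrence_nil (hs : 1 ≤ s) : ¬HasOccurrence π s ([] : List A) := by
  rintro ⟨C, hC, rfl, -⟩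
  simp [List.infix_nil.mp hC] at hs

end Words

section TrailingOnes

variable [DecidableEq A] {one : A} {π : ℕ → Finset A} {s : ℕ}

theorem trailingOnes_nil : trailingOnes one ([] : List A) = 0 := rfl

theorem trailingOnes_append_singleton (W : List A) (a : A) :
    trailingOnes one (W ++ [a]) = if a = one then trailingOnes one W + 1 else 0 := by
  unfold trailingOnes
  rw [List.reverse_append]
  by_cases ha : a = one <;> simp [ha]

theorem trailingOnes_append_of_le (P : List A) {B : List A}
    (h : trailingOnes one (P ++ B) ≤ B.length) :
    trailingOnes one (P ++ B) = trailingOnes one B := by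
  induction B using List.reverseRecOn with
  | nil => simpa [trailingOnes_nil] using h
  | append_singleton B a ih =>
    rw [← List.append_assoc, trailingOnes_append_singleton] at h ⊢
    rw [trailingOnes_append_singleton]
    split_ifs at h ⊢
    · rw [ih (by simp at h; omega)]
    · rfl

theorem hasMatchingSuffix_of_le_trailingOnes (hone : ∀ i, 1 ≤ i → i ≤ s → one ∈ π i)
    {W : List A} {k : ℕ} (hk : k ≤ trailingOnes one W) (hks : k ≤ s) :
    HasMatchingSuffix π W k := by
  induction W using List.reverseRecOn generalizing k with
  | nil => rw [Nat.le_zero.mp hk]; exact hasMatchingSuffix_zero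
  | append_singleton W a ih =>
    rw [trailingOnes_append_singleton] at hk
    rcases k with _ | k
    · exact hasMatchingSuffix_zero
    split_ifs at hk with ha
    · subst ha
      exact hasMatchingSuffix_append_singleton_succ.mpr
        ⟨ih (by omega) (by omega), hone _ (by omega) hks⟩
    · omega

end TrailingOnes

section SeedState

variable [DecidableEq A] {one : A} {π : ℕ → Finset A} {s : ℕ} {W : List A}

theorem mem_seedSet {x : ℕ} :
    x ∈ seedSet one π s W ↔
      1 ≤ x ∧ x ≤ s ∧ HasMatchingSuffix π W (x + trailingOnes one W) := by
  simp only [seedSet, Finset.mem_filter, Finset.mem_Icc, and_assoc]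

theorem seedSet_nil : seedSet one π s ([] : List A) = ∅ :=
  Finset.eq_empty_of_forall_notMem fun x hx => by
    obtain ⟨hx, -, hm⟩ := mem_seedSet.mp hx
    have := hm.le_length
    simp only [trailingOnes_nil, List.length_nil] at this
    omega

theorem hasMatchingSuffix_iff (hone : ∀ i, 1 ≤ i → i ≤ s → one ∈ π i) {m : ℕ}
    (hm : m ≤ s) :
    HasMatchingSuffix π W m ↔
      m ≤ trailingOnes one W ∨ ∃ x ∈ seedSet one π s W, x + trailingOnes one W = m := by
  constructor
  · intro h
    by_cases ht : m ≤ trailingOnes one W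
    · exact Or.inl ht
    refine Or.inr
      ⟨m - trailingOnes one W, mem_seedSet.mpr ⟨by omega, by omega, ?_⟩, by omega⟩
    rwa [Nat.sub_add_cancel (by omega)]
  · rintro (ht | ⟨x, hx, rfl⟩)
    · exact hasMatchingSuffix_of_le_trailingOnes hone ht hm
    · exact (mem_seedSet.mp hx).2.2

theorem isGreatest_hasMatchingSuffix (hone : ∀ i, 1 ≤ i → i ≤ s → one ∈ π i)
    (hW : ¬HasOccurrence π s W) :
    IsGreatest {m | HasMatchingSuffix π W m}
      ((seedSet one π s W).sup id + trailingOnes one W) := by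
  refine ⟨?_, fun m hm => ?_⟩
  · rcases (seedSet one π s W).eq_empty_or_nonempty with hX | hX
    · rw [hX, Finset.sup_empty, bot_eq_zero, zero_add]
      have ht : trailingOnes one W ≤ s := by
        by_contra! ht
        exact hW ((hasMatchingSuffix_of_le_trailingOnes hone ht.le le_rfl).hasOccurrence le_rfl)
      exact hasMatchingSuffix_of_le_trailingOnes hone le_rfl ht
    · obtain ⟨x, hx, hsup⟩ := Finset.exists_mem_eq_sup _ hX id
      rw [hsup]
      exact (mem_seedSet.mp hx).2.2
  · rcases (hasMatchingSuffix_iff hone (hm.lt_of_not_hasOccurrence hW).le).mp hm with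
      ht | ⟨x, hx, rfl⟩
    · omega
    · exact Nat.add_le_add_right (Finset.le_sup (f := id) hx) _

theorem trailingOnes_lt (hone : ∀ i, 1 ≤ i → i ≤ s → one ∈ π i)
    (hW : ¬HasOccurrence π s W) :
    trailingOnes one W < s :=
  lt_of_le_of_lt (Nat.le_add_left _ _)
    ((isGreatest_hasMatchingSuffix hone hW).1.lt_of_not_hasOccurrence hW)

theorem seedSet_append_one (hone : ∀ i, 1 ≤ i → i ≤ s → one ∈ π i)
    (hW : ¬HasOccurrence π s W) :
    seedSet one π s (W ++ [one]) = seedSet one π s W := by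
  ext x
  simp only [mem_seedSet, trailingOnes_append_singleton, if_true, ← add_assoc,
    hasMatchingSuffix_append_singleton_succ]
  exact and_congr_right fun _ => and_congr_right fun _ =>
    ⟨And.left, fun h => ⟨h, hone _ (by omega) (h.lt_of_not_hasOccurrence hW)⟩⟩

theorem hasOccurrence_append_one_iff (hs : 1 ≤ s)
    (hone : ∀ i, 1 ≤ i → i ≤ s → one ∈ π i) (hW : ¬HasOccurrence π s W) :
    HasOccurrence π s (W ++ [one]) ↔
      (seedSet one π s W).sup id + (trailingOnes one W + 1) = s := by
  obtain ⟨hmem, hmax⟩ := isGreatest_hasMatchingSuffix hone hW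
  have hlt := hmem.lt_of_not_hasOccurrence hW
  obtain ⟨k, rfl⟩ : ∃ k, s = k + 1 := ⟨s - 1, by omega⟩
  rw [hasOccurrence_append_singleton, or_iff_right hW, hasMatchingSuffix_append_singleton_succ,
    and_iff_left (hone _ hs le_rfl)]
  constructor
  · intro h
    have := hmax h
    omega
  · intro h
    rwa [show k = (seedSet one π (k + 1) W).sup id + trailingOnes one W by omega]

theorem seedSet_append_of_ne (hone : ∀ i, 1 ≤ i → i ≤ s → one ∈ π i)
    (hW : ¬HasOccurrence π s W) {a : A} (ha : a ≠ one) :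
    ((Finset.Icc 1 (trailingOnes one W + 1)).filter fun x => a ∈ π x) ∪
      (((seedSet one π s W).filter fun x =>
          x + trailingOnes one W + 1 ≤ s ∧ a ∈ π (x + trailingOnes one W + 1)).image
        fun x => x + trailingOnes one W + 1) =
      seedSet one π s (W ++ [a]) := by
  have ht := trailingOnes_lt hone hW
  ext y
  simp only [Finset.mem_union, Finset.mem_filter, Finset.mem_Icc, Finset.mem_image, mem_seedSet,
    trailingOnes_append_singleton, if_neg ha, add_zero]
  constructor
  · rintro (⟨⟨hy, hyt⟩, hya⟩ | ⟨x, ⟨hx, hxs, hxa⟩, rfl⟩)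
    · obtain ⟨m, rfl⟩ : ∃ m, y = m + 1 := ⟨y - 1, by omega⟩
      exact ⟨hy, by omega, hasMatchingSuffix_append_singleton_succ.mpr
        ⟨hasMatchingSuffix_of_le_trailingOnes hone (by omega) (by omega), hya⟩⟩
    · exact ⟨by omega, hxs, hasMatchingSuffix_append_singleton_succ.mpr ⟨hx.2.2, hxa⟩⟩
  · rintro ⟨hy, hys, hm⟩
    obtain ⟨m, rfl⟩ : ∃ m, y = m + 1 := ⟨y - 1, by omega⟩
    obtain ⟨hm, hma⟩ := hasMatchingSuffix_append_singleton_succ.mp hm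
    rcases (hasMatchingSuffix_iff hone (by omega)).mp hm with hmt | ⟨x, hx, rfl⟩
    · exact Or.inl ⟨⟨hy, by omega⟩, hma⟩
    · exact Or.inr ⟨x, ⟨mem_seedSet.mp hx, hys, hma⟩, rfl⟩

theorem hasOccurrence_append_iff_sup_eq (hs : 1 ≤ s) (hW : ¬HasOccurrence π s W) {a : A}
    (ha : a ≠ one) :
    HasOccurrence π s (W ++ [a]) ↔ (seedSet one π s (W ++ [a])).sup id = s := by
  have hle : (seedSet one π s (W ++ [a])).sup id ≤ s :=
    Finset.sup_le fun x hx => (mem_seedSet.mp hx).2.1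
  rw [hasOccurrence_append_singleton, or_iff_right hW, le_antisymm_iff, and_iff_right hle,
    Finset.le_sup_iff (by rw [bot_eq_zero]; omega)]
  simp only [mem_seedSet, trailingOnes_append_singleton, if_neg ha, add_zero, id]
  constructor
  · exact fun h => ⟨s, ⟨hs, le_rfl, h⟩, le_rfl⟩
  · rintro ⟨x, ⟨-, hxs, hx⟩, hsx⟩
    rwa [le_antisymm hxs hsx] at hx

theorem seedRead_append_singleton (q : Option (Finset ℕ × ℕ)) (W : List A) (a : A) :
    seedRead one π s q (W ++ [a]) = seedStep one π s (seedRead one π s q W) a := by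
  simp only [seedRead, List.foldl_append, List.foldl_cons, List.foldl_nil]

open Classical in
theorem seedRead_initial (hs : 1 ≤ s) (hone : ∀ i, 1 ≤ i → i ≤ s → one ∈ π i)
    (W : List A) :
    seedRead one π s (some (∅, 0)) W =
      if HasOccurrence π s W then none else some (seedSet one π s W, trailingOnes one W) := by
  induction W using List.reverseRecOn with
  | nil => rw [if_neg (not_hasOccurrence_nil hs), seedSet_nil, trailingOnes_nil]; rfl
  | append_singleton W a ih =>
    rw [seedRead_append_singleton, ih]
    by_cases hW : HasOccurrence π s W
    · rw [if_pos hW, if_pos (hasOccurrence_append_singleton.mpr (Or.inl hW))]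
      rfl
    rw [if_neg hW]
    by_cases ha : a = one
    · subst ha
      simp only [seedStep, if_true]
      rw [seedSet_append_one hone hW, trailingOnes_append_singleton, if_pos rfl]
      exact if_congr (hasOccurrence_append_one_iff hs hone hW).symm rfl rfl
    · simp only [seedStep, if_neg ha]
      rw [seedSet_append_of_ne hone hW ha, trailingOnes_append_singleton, if_neg ha]
      exact if_congr (hasOccurrence_append_iff_sup_eq hs hW ha).symm rfl rfl

theorem exists_suffix_seedState_eq (hone : ∀ i, 1 ≤ i → i ≤ s → one ∈ π i)
    (hW : ¬HasOccurrence π s W) :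
    ∃ B, B <:+ W ∧ B.length < s ∧ MatchesPrefix π B ∧
      trailingOnes one B = trailingOnes one W ∧ seedSet one π s B = seedSet one π s W := by
  obtain ⟨hmem, hmax⟩ := isGreatest_hasMatchingSuffix hone hW
  have hlt := hmem.lt_of_not_hasOccurrence hW
  obtain ⟨B, hB, hlen, hm⟩ := hmem
  have htB : trailingOnes one B = trailingOnes one W := by
    obtain ⟨P, rfl⟩ := hB
    exact (trailingOnes_append_of_le P (by omega)).symm
  refine ⟨B, hB, hlen ▸ hlt, hm, htB, Finset.ext fun x => ?_⟩
  rw [mem_seedSet, mem_seedSet, htB]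
  refine and_congr_right fun _ => and_congr_right fun _ => ⟨fun h => ?_, fun h => ?_⟩
  · exact (hasMatchingSuffix_iff_of_suffix hB h.le_length).mp h
  · exact (hasMatchingSuffix_iff_of_suffix hB (hlen ▸ hmax h)).mpr h

end SeedState

end SubsetSeed

open SubsetSeed in
/-- The number of states of `S_π` reachable from its initial state is at most the number
of states of the Aho–Corasick automaton of `π` (its non-final states are the words of
length `< s` matched by the corresponding prefix of `π`, plus one merged final state,
modelled here by `none`). -/
theorem stmt_11 [DecidableEq A] [Fintype A] (one : A) (π : ℕ → Finset A) (s : ℕ)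
    (hs : 1 ≤ s) (hone : ∀ i, 1 ≤ i → i ≤ s → one ∈ π i) :
    Set.ncard {q : Option (Finset ℕ × ℕ) |
        ∃ W : List A, seedRead one π s (some (∅, 0)) W = q} ≤
      Set.ncard (({none} : Set (Option (List A))) ∪
        Option.some '' {B : List A | B.length < s ∧
          ∀ i (h : i < B.length), B.get ⟨i, h⟩ ∈ π (i + 1)}) := by
  classical
  have hfin : (({none} : Set (Option (List A))) ∪ Option.some '' {B : List A | B.length < s ∧
      ∀ i (h : i < B.length), B.get ⟨i, h⟩ ∈ π (i + 1)}).Finite :=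
    (Set.finite_singleton none).union
      (((List.finite_length_lt A s).subset fun B hB => hB.1).image _)
  let acToSeed : Option (List A) → Option (Finset ℕ × ℕ) :=
    fun o => o.bind (seedRead one π s (some (∅, 0)))
  refine (Set.ncard_le_ncard ?_ (hfin.image acToSeed)).trans (Set.ncard_image_le hfin)
  rintro _ ⟨W, rfl⟩
  by_cases hW : HasOccurrence π s W
  · exact ⟨none, Or.inl rfl, by rw [seedRead_initial hs hone, if_pos hW]; rfl⟩
  obtain ⟨B, hB, hlen, hm, ht, hX⟩ := exists_suffix_seedState_eq hone hW
  refine ⟨some B, Or.inr ⟨B, ⟨hlen, hm⟩, rfl⟩, ?_⟩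
  change seedRead one π s (some (∅, 0)) B = _
  rw [seedRead_initial hs hone, seedRead_initial hs hone, if_neg hW,
    if_neg fun h => hW (h.mono hB.isInfix), ht, hX]
end

section
/- If a non-final state ⟨X,t⟩ of S_π with t > 0 is reachable from the initial state, then the state ⟨X,t−1⟩ is reachable from the initial state; consequently, if ⟨X,t⟩ is reachable then ⟨X,0⟩ is reachable. -/
variable {A : Type*}

/-! A transition into a state `⟨X, t + 1⟩` can only be a `1`-transition out of `⟨X, t⟩`, since
every other letter resets the counter to `0`. Hence the last letter of a word reaching
`⟨X, t + 1⟩` can be dropped. -/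

theorem seedStep_eq_some_succ [DecidableEq A] {one : A} {π : ℕ → Finset A} {s : ℕ}
    {q : Option (Finset ℕ × ℕ)} {a : A} {X : Finset ℕ} {t : ℕ}
    (h : seedStep one π s q a = some (X, t + 1)) : q = some (X, t) := by
  rcases q with _ | ⟨Y, u⟩
  · simp [seedStep] at h
  · simp only [seedStep] at h
    split_ifs at h <;> simp_all

theorem exists_seedRead_pred [DecidableEq A] {one : A} {π : ℕ → Finset A} {s : ℕ}
    {Y X : Finset ℕ} {t : ℕ}
    (h : ∃ W : List A, seedRead one π s (some (Y, 0)) W = some (X, t + 1)) :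
    ∃ W : List A, seedRead one π s (some (Y, 0)) W = some (X, t) := by
  obtain ⟨W, hW⟩ := h
  rcases W.eq_nil_or_concat with rfl | ⟨W, a, rfl⟩
  · simp [seedRead] at hW
  · rw [seedRead, List.concat_eq_append, List.foldl_append, List.foldl_cons,
      List.foldl_nil] at hW
    exact ⟨W, seedStep_eq_some_succ hW⟩

theorem exists_seedRead_zero [DecidableEq A] {one : A} {π : ℕ → Finset A} {s : ℕ}
    {Y X : Finset ℕ} {t : ℕ}
    (h : ∃ W : List A, seedRead one π s (some (Y, 0)) W = some (X, t)) :
    ∃ W : List A, seedRead one π s (some (Y, 0)) W = some (X, 0) := by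
  induction t with
  | zero => exact h
  | succ t ih => exact ih (exists_seedRead_pred h)

theorem stmt_14_general [DecidableEq A] (one : A) (π : ℕ → Finset A) (s : ℕ) :
    (∀ (X : Finset ℕ) (t : ℕ), 0 < t →
        (∃ W : List A, seedRead one π s (some (∅, 0)) W = some (X, t)) →
        ∃ W : List A, seedRead one π s (some (∅, 0)) W = some (X, t - 1)) ∧
      ∀ (X : Finset ℕ) (t : ℕ),
        (∃ W : List A, seedRead one π s (some (∅, 0)) W = some (X, t)) →
        ∃ W : List A, seedRead one π s (some (∅, 0)) W = some (X, 0) := by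
  refine ⟨fun X t ht h => ?_, fun X t h => exists_seedRead_zero h⟩
  obtain ⟨t, rfl⟩ := Nat.exists_eq_add_of_lt ht
  exact exists_seedRead_pred h

/-- If a non-final state `⟨X,t⟩` of `S_π` with `t > 0` is reachable from the initial
state, then `⟨X,t-1⟩` is reachable; consequently, if `⟨X,t⟩` is reachable then `⟨X,0⟩`
is reachable. -/
theorem stmt_14 [DecidableEq A] (one : A) (π : ℕ → Finset A) (s : ℕ)
    (hs : 1 ≤ s) (hone : ∀ i, 1 ≤ i → i ≤ s → one ∈ π i) :
    (∀ (X : Finset ℕ) (t : ℕ), 0 < t →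
        (∃ W : List A, seedRead one π s (some (∅, 0)) W = some (X, t)) →
        ∃ W : List A, seedRead one π s (some (∅, 0)) W = some (X, t - 1)) ∧
      ∀ (X : Finset ℕ) (t : ℕ),
        (∃ W : List A, seedRead one π s (some (∅, 0)) W = some (X, t)) →
        ∃ W : List A, seedRead one π s (some (∅, 0)) W = some (X, 0) :=
  stmt_14_general one π s
end
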